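/- Moment matching at the optimum: let p̂ be a probability distribution on Ω and suppose θ* : S → ℝ minimizes θ ↦ D_KL(p̂, p_θ) over ℝ^S. Then the expectation parameters match the empirical ones: η_{θ*}(s) = η̂(s) for every s ∈ S, where η_{θ*}(s) = Σ_{ω ≥ s} p(ω; θ*) and η̂(s) = Σ_{ω ≥ s} p̂(ω). -/

import Mathlib

/-!
Writing `F θ ω = ∑_{s ≤ ω} θ s`, the divergence splits as
`D_KL(p̂, p_θ) = ∑ p̂ log p̂ - ∑_ω p̂ ω F θ ω + ψ θ`.
Moving `θ*` along the coordinate `s` by `t` adds `t · 𝟙[s ≤ ω]` to `F θ* ω`, so along this line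
the divergence is a constant plus `t ↦ log ∑ exp (F θ* ω + t 𝟙[s ≤ ω]) - ∑ p̂ ω (F θ* ω + t 𝟙[s ≤ ω])`.
Its derivative at `0` is `η_{θ*}(s) - η̂(s)`, which vanishes at the minimum.
-/

open scoped Classical BigOperators

open Finset Real

section LogSumExp

variable {ι : Type*} [Fintype ι]

theorem sum_mul_log_div_exp_sub (q a : ι → ℝ) (L : ℝ) (hq : ∑ i, q i = 1) :
    ∑ i, q i * log (q i / exp (a i - L)) = ∑ i, q i * log (q i) - ∑ i, q i * a i + L := by
  have hterm : ∀ i, q i * log (q i / exp (a i - L)) = q i * log (q i) - q i * a i + q i * L := by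
    intro i
    rcases eq_or_ne (q i) 0 with h | h
    · simp [h]
    · rw [log_div h (exp_pos _).ne', log_exp]
      ring
  simp only [hterm, sum_add_distrib, sum_sub_distrib, ← sum_mul, hq, one_mul]

theorem hasDerivAt_log_sum_exp_add_mul [Nonempty ι] (a c : ι → ℝ) (t : ℝ) :
    HasDerivAt (fun t => log (∑ i, exp (a i + t * c i)))
      ((∑ i, c i * exp (a i + t * c i)) / ∑ i, exp (a i + t * c i)) t := by
  have hsum : HasDerivAt (fun t => ∑ i, exp (a i + t * c i))
      (∑ i, c i * exp (a i + t * c i)) t := by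
    refine HasDerivAt.fun_sum fun i _ => ?_
    simpa [mul_comm] using (((hasDerivAt_id t).mul_const (c i)).const_add (a i)).exp
  exact hsum.log (sum_pos (fun i _ => exp_pos _) univ_nonempty).ne'

theorem sum_mul_exp_div_sum_exp_eq_of_isLocalMin [Nonempty ι] (q a c : ι → ℝ)
    (h : IsLocalMin (fun t => log (∑ i, exp (a i + t * c i)) - ∑ i, q i * (a i + t * c i)) 0) :
    (∑ i, c i * exp (a i)) / ∑ i, exp (a i) = ∑ i, q i * c i := by
  have hlin : HasDerivAt (fun t : ℝ => ∑ i, q i * (a i + t * c i)) (∑ i, q i * c i) 0 := by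
    refine HasDerivAt.fun_sum fun i _ => ?_
    simpa using (((hasDerivAt_id (0 : ℝ)).mul_const (c i)).const_add (a i)).const_mul (q i)
  simpa [sub_eq_zero] using
    h.hasDerivAt_eq_zero ((hasDerivAt_log_sum_exp_add_mul a c 0).sub hlin)

end LogSumExp

theorem moment_matching_at_optimum_general
    {Ω : Type*} [Fintype Ω] [Nonempty Ω] [PartialOrder Ω]
    (S : Finset Ω)
    (phat : Ω → ℝ) (hphat1 : ∑ ω : Ω, phat ω = 1)
    (ψ : ({s : Ω // s ∈ S} → ℝ) → ℝ)
    (hψ : ∀ θ : {s : Ω // s ∈ S} → ℝ,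
      ψ θ = Real.log (∑ ω : Ω,
        Real.exp (∑ s ∈ S.attach.filter (fun s : {s : Ω // s ∈ S} => (s : Ω) ≤ ω), θ s)))
    (p : ({s : Ω // s ∈ S} → ℝ) → Ω → ℝ)
    (hp : ∀ (θ : {s : Ω // s ∈ S} → ℝ) (ω : Ω), p θ ω =
      Real.exp ((∑ s ∈ S.attach.filter (fun s : {s : Ω // s ∈ S} => (s : Ω) ≤ ω), θ s) - ψ θ))
    (KL : ({s : Ω // s ∈ S} → ℝ) → ℝ)
    (hKL : ∀ θ : {s : Ω // s ∈ S} → ℝ,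
      KL θ = ∑ ω : Ω, phat ω * Real.log (phat ω / p θ ω))
    (θstar : {s : Ω // s ∈ S} → ℝ)
    (hmin : ∀ θ : {s : Ω // s ∈ S} → ℝ, KL θstar ≤ KL θ) :
    ∀ s : {s : Ω // s ∈ S},
      (∑ ω ∈ Finset.univ.filter (fun ω => (s : Ω) ≤ ω), p θstar ω)
        = ∑ ω ∈ Finset.univ.filter (fun ω => (s : Ω) ≤ ω), phat ω := by
  intro s
  set a : Ω → ℝ := fun ω =>
    ∑ s' ∈ S.attach.filter (fun s' : {s : Ω // s ∈ S} => (s' : Ω) ≤ ω), θstar s'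
  set c : Ω → ℝ := fun ω => if (s : Ω) ≤ ω then 1 else 0
  set θ : ℝ → {s : Ω // s ∈ S} → ℝ := fun t => θstar + Pi.single s t
  have hline : ∀ (t : ℝ) (ω : Ω),
      ∑ s' ∈ S.attach.filter (fun s' : {s : Ω // s ∈ S} => (s' : Ω) ≤ ω), θ t s'
        = a ω + t * c ω := by
    intro t ω
    simp [θ, a, c, sum_add_distrib, sum_pi_single']
  have hKL_line : ∀ t : ℝ, KL (θ t) = ∑ ω, phat ω * log (phat ω)
      + (log (∑ ω, exp (a ω + t * c ω)) - ∑ ω, phat ω * (a ω + t * c ω)) := by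
    intro t
    simp only [hKL, hp, hψ, sum_mul_log_div_exp_sub _ _ _ hphat1, hline]
    ring
  have hmin_line : IsLocalMin
      (fun t => log (∑ ω, exp (a ω + t * c ω)) - ∑ ω, phat ω * (a ω + t * c ω)) 0 :=
    Filter.Eventually.of_forall fun t => by
      have := hmin (θ t)
      rw [show θstar = θ 0 by simp [θ], hKL_line, hKL_line] at this
      simpa using this
  have hp_star : ∀ ω, p θstar ω = exp (a ω) / ∑ ω', exp (a ω') := fun ω => by
    rw [hp, hψ, exp_sub, exp_log (sum_pos (fun _ _ => exp_pos _) univ_nonempty)]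
  simp only [sum_filter, hp_star]
  convert sum_mul_exp_div_sum_exp_eq_of_isLocalMin phat a c hmin_line using 1 <;>
    simp [c, sum_div, ite_mul, mul_ite, ite_div]

/-- Moment matching at the optimum: if `θ*` minimizes the KL divergence
`θ ↦ D_KL(p̂, p_θ)` over `ℝ^S`, then the expectation parameters of the model
match the empirical ones: `η_{θ*}(s) = η̂(s)` for every `s ∈ S`. -/
theorem moment_matching_at_optimum
    {Ω : Type*} [Fintype Ω] [Nonempty Ω] [PartialOrder Ω]
    (S : Finset Ω)
    (phat : Ω → ℝ) (hphat0 : ∀ ω, 0 ≤ phat ω) (hphat1 : ∑ ω : Ω, phat ω = 1)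
    (ψ : ({s : Ω // s ∈ S} → ℝ) → ℝ)
    (hψ : ∀ θ : {s : Ω // s ∈ S} → ℝ,
      ψ θ = Real.log (∑ ω : Ω,
        Real.exp (∑ s ∈ S.attach.filter (fun s : {s : Ω // s ∈ S} => (s : Ω) ≤ ω), θ s)))
    (p : ({s : Ω // s ∈ S} → ℝ) → Ω → ℝ)
    (hp : ∀ (θ : {s : Ω // s ∈ S} → ℝ) (ω : Ω), p θ ω =
      Real.exp ((∑ s ∈ S.attach.filter (fun s : {s : Ω // s ∈ S} => (s : Ω) ≤ ω), θ s) - ψ θ))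
    (KL : ({s : Ω // s ∈ S} → ℝ) → ℝ)
    (hKL : ∀ θ : {s : Ω // s ∈ S} → ℝ,
      KL θ = ∑ ω : Ω, phat ω * Real.log (phat ω / p θ ω))
    (θstar : {s : Ω // s ∈ S} → ℝ)
    (hmin : ∀ θ : {s : Ω // s ∈ S} → ℝ, KL θstar ≤ KL θ) :
    ∀ s : {s : Ω // s ∈ S},
      (∑ ω ∈ Finset.univ.filter (fun ω => (s : Ω) ≤ ω), p θstar ω)
        = ∑ ω ∈ Finset.univ.filter (fun ω => (s : Ω) ≤ ω), phat ω :=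
  moment_matching_at_optimum_general S phat hphat1 ψ hψ p hp KL hKL θstar hmin
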